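/- If the Hermitian matrix 2γM + C is positive definite, then K(γ) = γ²M + γC + K is positive semidefinite but singular (not invertible). -/

import Mathlib

/-!
Since `√` vanishes on negative reals, `r(x)` is the single formula `(-c + √(c² - 4mk)) / (2m)`,
which is continuous on `x ≠ 0` and invariant under real rescaling of `x`. Hence `γ` is the maximum
of `r` on the compact unit sphere, attained at some `x₀ ≠ 0`. For every `x ≠ 0`, `r(x) ≤ γ` puts `γ`
to the right of the larger root of `m(x) λ² + c(x) λ + k(x)`, so `x* K(γ) x ≥ 0`. At `x₀`,
`2γ m(x₀) + c(x₀) > 0` is the square root of the discriminant, so the discriminant is positive and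
`γ` is an actual root: `x₀* K(γ) x₀ = 0`, which for a positive semidefinite matrix means
`K(γ) x₀ = 0`.
-/

open Matrix
open scoped ComplexOrder

noncomputable section

/-- The value `x* P x` (which is real for Hermitian `P`), taken as its real part. -/
def qf {n : ℕ} (P : Matrix (Fin n) (Fin n) ℂ) (x : Fin n → ℂ) : ℝ :=
  (star x ⬝ᵥ P.mulVec x).re

/-- The (positive semidefinite) square root of a positive semidefinite matrix,
extended by `0` to all matrices. -/
def msqrt {n : ℕ} (P : Matrix (Fin n) (Fin n) ℂ) : Matrix (Fin n) (Fin n) ℂ :=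
  open scoped Classical in
  if h : P.PosSemidef then
    h.1.eigenvectorUnitary.1 * diagonal ((↑) ∘ Real.sqrt ∘ h.1.eigenvalues) *
      (star h.1.eigenvectorUnitary : Matrix (Fin n) (Fin n) ℂ)
  else 0

/-- The quadratic matrix pencil `K(λ) = λ²M + λC + K`. -/
def Kpen {n : ℕ} (M C K : Matrix (Fin n) (Fin n) ℂ) (lam : ℂ) :
    Matrix (Fin n) (Fin n) ℂ :=
  lam ^ 2 • M + lam • C + K

/-- The real part of the `+`-root of the scalar quadratic
`m(x) λ² + c(x) λ + k(x) = 0`. -/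
def rfun {n : ℕ} (M C K : Matrix (Fin n) (Fin n) ℂ) (x : Fin n → ℂ) : ℝ :=
  open scoped Classical in
  if (qf C x) ^ 2 ≥ 4 * qf M x * qf K x then
    (-(qf C x) + Real.sqrt ((qf C x) ^ 2 - 4 * qf M x * qf K x)) / (2 * qf M x)
  else
    -(qf C x) / (2 * qf M x)

/-- The spectral-shift bound `γ = sup_{x ≠ 0} Re p₊(x)`. -/
def gam {n : ℕ} (M C K : Matrix (Fin n) (Fin n) ℂ) : ℝ :=
  sSup {y : ℝ | ∃ x : Fin n → ℂ, x ≠ 0 ∧ rfun M C K x = y}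

/-- The phase-space matrix `A = [[0, K½ M⁻½], [−M⁻½ K½, −M⁻½ C M⁻½]]`. -/
def phaseA {n : ℕ} (M C K : Matrix (Fin n) (Fin n) ℂ) :
    Matrix (Fin n ⊕ Fin n) (Fin n ⊕ Fin n) ℂ :=
  fromBlocks 0 (msqrt K * (msqrt M)⁻¹)
    (-((msqrt M)⁻¹ * msqrt K)) (-((msqrt M)⁻¹ * C * (msqrt M)⁻¹))

/-- The operator norm of a matrix with respect to the Euclidean norm. -/
def opNorm {m : Type*} [Fintype m] [DecidableEq m] (A : Matrix m m ℂ) : ℝ :=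
  ‖toEuclideanCLM (𝕜 := ℂ) A‖

/-- The block matrix `L(μ) = [[K½ K(μ)⁻½, 0], [μ M½ K(μ)⁻½, I]]`. -/
def Lmat {n : ℕ} (M C K : Matrix (Fin n) (Fin n) ℂ) (mu : ℝ) :
    Matrix (Fin n ⊕ Fin n) (Fin n ⊕ Fin n) ℂ :=
  fromBlocks (msqrt K * (msqrt (Kpen M C K (mu : ℂ)))⁻¹) 0
    ((mu : ℂ) • (msqrt M * (msqrt (Kpen M C K (mu : ℂ)))⁻¹)) 1


/-- The real part of the larger root of `m λ² + c λ + k`: for a negative discriminant `√` returns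
`0`, which gives the common real part `-c / (2m)` of the two roots. -/
def quadRoot (m c k : ℝ) : ℝ :=
  (-c + √(c ^ 2 - 4 * m * k)) / (2 * m)

section QuadRoot

variable {m c k : ℝ}

lemma two_mul_quadRoot_mul_add_eq_sqrt (hm : 0 < m) :
    2 * quadRoot m c k * m + c = √(c ^ 2 - 4 * m * k) := by
  unfold quadRoot
  field_simp
  ring

lemma eval_nonneg_of_quadRoot_le {g : ℝ} (hm : 0 < m) (hg : quadRoot m c k ≤ g) :
    0 ≤ g ^ 2 * m + g * c + k := by
  have hs : √(c ^ 2 - 4 * m * k) ≤ 2 * g * m + c := by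
    rw [← two_mul_quadRoot_mul_add_eq_sqrt hm]
    nlinarith
  have hΔ : c ^ 2 - 4 * m * k ≤ √(c ^ 2 - 4 * m * k) ^ 2 := Real.sq_sqrt' ▸ le_max_left _ _
  -- `4m (g²m + gc + k) = (2gm + c)² - (c² - 4mk)`
  nlinarith [Real.sqrt_nonneg (c ^ 2 - 4 * m * k)]

lemma eval_quadRoot_eq_zero (hm : 0 < m) (hd : 0 < 2 * quadRoot m c k * m + c) :
    quadRoot m c k ^ 2 * m + quadRoot m c k * c + k = 0 := by
  have hroot := two_mul_quadRoot_mul_add_eq_sqrt (c := c) (k := k) hm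
  rw [hroot, Real.sqrt_pos] at hd
  have hsq := Real.sq_sqrt hd.le
  rw [← hroot] at hsq
  have : 4 * m * (quadRoot m c k ^ 2 * m + quadRoot m c k * c + k) = 0 := by
    linear_combination hsq
  simpa [hm.ne'] using this

lemma quadRoot_mul_mul_mul {t : ℝ} (ht : 0 < t) :
    quadRoot (t * m) (t * c) (t * k) = quadRoot m c k := by
  have : (t * c) ^ 2 - 4 * (t * m) * (t * k) = t ^ 2 * (c ^ 2 - 4 * m * k) := by ring
  rw [quadRoot, quadRoot, this, Real.sqrt_mul (sq_nonneg t), Real.sqrt_sq ht.le]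
  field_simp

end QuadRoot

section QuadraticForm

variable {n : ℕ} {A : Matrix (Fin n) (Fin n) ℂ} {x : Fin n → ℂ}

lemma qf_add (P Q : Matrix (Fin n) (Fin n) ℂ) (x : Fin n → ℂ) :
    qf (P + Q) x = qf P x + qf Q x := by
  simp [qf, add_mulVec, dotProduct_add]

lemma qf_ofReal_smul (t : ℝ) (P : Matrix (Fin n) (Fin n) ℂ) (x : Fin n → ℂ) :
    qf ((t : ℂ) • P) x = t * qf P x := by
  simp [qf, smul_mulVec, dotProduct_smul]

lemma qf_smul_ofReal (P : Matrix (Fin n) (Fin n) ℂ) (t : ℝ) (x : Fin n → ℂ) :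
    qf P ((t : ℂ) • x) = t ^ 2 * qf P x := by
  simp [qf, mulVec_smul, dotProduct_smul, smul_dotProduct]
  ring

lemma continuous_qf (P : Matrix (Fin n) (Fin n) ℂ) : Continuous (qf P) :=
  Complex.continuous_re.comp <|
    continuous_star.dotProduct (continuous_const.matrix_mulVec continuous_id)

lemma Matrix.IsHermitian.ofReal_qf (hA : A.IsHermitian) (x : Fin n → ℂ) :
    ((qf A x : ℝ) : ℂ) = star x ⬝ᵥ A *ᵥ x :=
  Complex.ext (by simp [qf]) (by simpa using (hA.im_star_dotProduct_mulVec_self x).symm)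

lemma Matrix.PosDef.qf_pos (hA : A.PosDef) (hx : x ≠ 0) : 0 < qf A x :=
  hA.re_dotProduct_pos hx

lemma Matrix.IsHermitian.posSemidef_of_qf_nonneg (hA : A.IsHermitian)
    (h : ∀ x ≠ 0, 0 ≤ qf A x) : A.PosSemidef := by
  refine .of_dotProduct_mulVec_nonneg hA fun x => ?_
  rcases eq_or_ne x 0 with rfl | hx
  · simp
  · rw [← hA.ofReal_qf, Complex.zero_le_real]
    exact h x hx

lemma Matrix.PosSemidef.not_isUnit_of_qf_eq_zero (hA : A.PosSemidef) (hx : x ≠ 0)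
    (h0 : qf A x = 0) : ¬IsUnit A := by
  have hker : A *ᵥ x = 0 := by
    rw [← hA.dotProduct_mulVec_zero_iff, ← hA.isHermitian.ofReal_qf, h0, Complex.ofReal_zero]
  rw [← mulVec_injective_iff_isUnit]
  exact fun hinj => hx (hinj (hker.trans (mulVec_zero A).symm))

end QuadraticForm

section Pencil

variable {n : ℕ} {M C K : Matrix (Fin n) (Fin n) ℂ}

lemma qf_Kpen (M C K : Matrix (Fin n) (Fin n) ℂ) (g : ℝ) (x : Fin n → ℂ) :
    qf (Kpen M C K g) x = g ^ 2 * qf M x + g * qf C x + qf K x := by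
  rw [Kpen, ← Complex.ofReal_pow, qf_add, qf_add, qf_ofReal_smul, qf_ofReal_smul]

lemma Kpen_isHermitian (hM : M.IsHermitian) (hC : C.IsHermitian) (hK : K.IsHermitian) (g : ℝ) :
    (Kpen M C K g).IsHermitian := by
  have hreal (r : ℝ) : IsSelfAdjoint (r : ℂ) := Complex.conj_ofReal r
  rw [Kpen, ← Complex.ofReal_pow]
  exact ((hM.smul (hreal _)).add (hC.smul (hreal _))).add hK

lemma rfun_eq_quadRoot (M C K : Matrix (Fin n) (Fin n) ℂ) (x : Fin n → ℂ) :
    rfun M C K x = quadRoot (qf M x) (qf C x) (qf K x) := by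
  rw [rfun, quadRoot]
  split_ifs with hΔ
  · rfl
  · rw [Real.sqrt_eq_zero'.mpr (by linarith), add_zero]

lemma rfun_smul_ofReal {t : ℝ} (ht : t ≠ 0) (x : Fin n → ℂ) :
    rfun M C K ((t : ℂ) • x) = rfun M C K x := by
  simp only [rfun_eq_quadRoot, qf_smul_ofReal]
  exact quadRoot_mul_mul_mul (by positivity)

lemma continuousOn_rfun (hM : M.PosDef) : ContinuousOn (rfun M C K) {x | x ≠ 0} := by
  simp only [funext (rfun_eq_quadRoot M C K), quadRoot]
  have := continuous_qf M
  have := continuous_qf C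
  have := continuous_qf K
  refine ContinuousOn.div (by fun_prop) (by fun_prop) fun x hx => ?_
  exact (mul_pos two_pos (hM.qf_pos hx)).ne'

lemma rfun_image_sphere :
    rfun M C K '' Metric.sphere 0 1 = {y | ∃ x, x ≠ 0 ∧ rfun M C K x = y} := by
  ext y
  constructor
  · rintro ⟨x, hx, rfl⟩
    exact ⟨x, ne_zero_of_mem_unit_sphere ⟨x, hx⟩, rfl⟩
  · rintro ⟨x, hx, rfl⟩
    refine ⟨((‖x‖⁻¹ : ℝ) : ℂ) • x, ?_, rfun_smul_ofReal (by positivity) x⟩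
    simpa using norm_smul_inv_norm (𝕜 := ℂ) hx

lemma isGreatest_gam (hn : 1 ≤ n) (hM : M.PosDef) :
    IsGreatest {y | ∃ x, x ≠ 0 ∧ rfun M C K x = y} (gam M C K) := by
  have : Nonempty (Fin n) := ⟨⟨0, hn⟩⟩
  rw [gam, ← rfun_image_sphere]
  refine IsCompact.isGreatest_sSup ?_ ((NormedSpace.sphere_nonempty.mpr zero_le_one).image _)
  refine (isCompact_sphere 0 1).image_of_continuousOn ((continuousOn_rfun hM).mono ?_)
  exact fun x hx => ne_zero_of_mem_unit_sphere ⟨x, hx⟩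

lemma Kpen_posSemidef_of_rfun_le (hM : M.PosDef) (hC : C.IsHermitian) (hK : K.IsHermitian)
    {g : ℝ} (hg : ∀ x ≠ 0, rfun M C K x ≤ g) : (Kpen M C K g).PosSemidef := by
  refine (Kpen_isHermitian hM.isHermitian hC hK g).posSemidef_of_qf_nonneg fun x hx => ?_
  rw [qf_Kpen]
  exact eval_nonneg_of_quadRoot_le (hM.qf_pos hx) (rfun_eq_quadRoot M C K x ▸ hg x hx)

end Pencil

/-- If `2γM + C` is positive definite, then `K(γ)` is positive semidefinite
but not invertible. -/
theorem Kgamma_posSemidef_singular {n : ℕ} (hn : 1 ≤ n)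
    (M C K : Matrix (Fin n) (Fin n) ℂ)
    (hM : M.PosDef) (hC : C.PosDef) (hK : K.PosDef)
    (h : (((2 * gam M C K : ℝ) : ℂ) • M + C).PosDef) :
    (Kpen M C K ((gam M C K : ℝ) : ℂ)).PosSemidef ∧
      ¬IsUnit (Kpen M C K ((gam M C K : ℝ) : ℂ)) := by
  obtain ⟨⟨x₀, hx₀, hrfun⟩, hγ⟩ := isGreatest_gam (C := C) (K := K) hn hM
  have hpsd : (Kpen M C K (gam M C K)).PosSemidef :=
    Kpen_posSemidef_of_rfun_le hM hC.isHermitian hK.isHermitian fun x hx => hγ ⟨x, hx, rfl⟩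
  refine ⟨hpsd, hpsd.not_isUnit_of_qf_eq_zero hx₀ ?_⟩
  have hd := h.qf_pos hx₀
  rw [qf_add, qf_ofReal_smul, ← hrfun, rfun_eq_quadRoot, mul_assoc] at hd
  rw [qf_Kpen, ← hrfun, rfun_eq_quadRoot]
  exact eval_quadRoot_eq_zero (hM.qf_pos hx₀) (by linarith)
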